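/- arXiv:1706.02325 — 2 statements merged into one kernel-verified Lean document; each statement's English description precedes it below -/
import Mathlib

section
/- Let T₀, T₁, …, T_N be symmetric positive semidefinite linear operators on a finite-dimensional real inner product space (V, a) and set T = Σₖ Tₖ. Suppose (stable decomposition) there exists C₀ > 0 such that for every u ∈ V there exist uₖ with u = Σₖ uₖ and Σₖ a(Tₖ† uₖ, uₖ) ≤ C₀ a(u,u) where each Tₖ is an a-orthogonal projection onto a subspace Vₖ and uₖ ∈ Vₖ. Then a(Tu, u) ≥ C₀⁻¹ a(u,u) for all u ∈ V. -/
theorem additive_schwarz_lower_bound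
    {V : Type*} [AddCommGroup V] [Module ℝ V] [FiniteDimensional ℝ V]
    (a : V →ₗ[ℝ] V →ₗ[ℝ] ℝ)
    (ha_symm : ∀ u v, a u v = a v u)
    (ha_pos : ∀ u : V, u ≠ 0 → 0 < a u u)
    (N : ℕ) (Vk : Fin (N + 1) → Submodule ℝ V)
    (T : Fin (N + 1) → V →ₗ[ℝ] V)
    (hTrange : ∀ k, ∀ u : V, T k u ∈ Vk k)
    (hTproj : ∀ k, ∀ u : V, ∀ v ∈ Vk k, a (T k u) v = a u v)
    (C₀ : ℝ) (hC₀ : 0 < C₀)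
    (hstable : ∀ u : V, ∃ ud : Fin (N + 1) → V,
      (∀ k, ud k ∈ Vk k) ∧ u = ∑ k, ud k ∧
      ∑ k, a (ud k) (ud k) ≤ C₀ * a u u) :
    ∀ u : V, C₀⁻¹ * a u u ≤ a (∑ k, T k u) u := by
  -- nonnegativity
  have hnn : ∀ v : V, 0 ≤ a v v := by
    intro v
    by_cases hv : v = 0
    · simp [hv]
    · exact (ha_pos v hv).le
  -- Cauchy-Schwarz
  have hCS : ∀ x y : V, (a x y) ^ 2 ≤ a x x * a y y := by
    intro x y
    by_cases hy : y = 0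
    · simp [hy]
    · have hyy : 0 < a y y := ha_pos y hy
      set t : ℝ := a x y / a y y with ht
      have h0 : 0 ≤ a (x - t • y) (x - t • y) := hnn _
      have hexp : a (x - t • y) (x - t • y)
          = a x x - 2 * t * a x y + t ^ 2 * a y y := by
        simp only [map_sub, map_smul, LinearMap.sub_apply, LinearMap.smul_apply,
          smul_eq_mul]
        rw [ha_symm y x]
        ring
      rw [hexp, ht] at h0
      have h1 : 0 ≤ a x x - (a x y) ^ 2 / a y y := by
        have : 2 * (a x y / a y y) * a x y - (a x y / a y y) ^ 2 * a y y
            = (a x y) ^ 2 / a y y := by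
          field_simp
          ring
        nlinarith [this]
      have := (div_le_iff₀ hyy).mp (by linarith : (a x y) ^ 2 / a y y ≤ a x x)
      linarith
  intro u
  by_cases hu : u = 0
  · simp [hu]
  have huu : 0 < a u u := ha_pos u hu
  obtain ⟨ud, hudmem, hudsum, hudbound⟩ := hstable u
  -- a u u = ∑ a (T k u) (ud k)
  have key : a u u = ∑ k, a (T k u) (ud k) := by
    calc a u u = a u (∑ k, ud k) := by rw [← hudsum]
      _ = ∑ k, a u (ud k) := map_sum (a u) _ _
      _ = ∑ k, a (T k u) (ud k) :=
          Finset.sum_congr rfl fun k _ => (hTproj k u (ud k) (hudmem k)).symm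
  -- RHS equals ∑ a (T k u) (T k u)
  have hS : a (∑ k, T k u) u = ∑ k, a (T k u) (T k u) := by
    rw [map_sum, LinearMap.sum_apply]
    refine Finset.sum_congr rfl fun k _ => ?_
    rw [hTproj k u (T k u) (hTrange k u), ha_symm]
  set S : ℝ := ∑ k, a (T k u) (T k u) with hSdef
  have hSnn : 0 ≤ S := Finset.sum_nonneg fun k _ => hnn _
  have hQnn : 0 ≤ ∑ k, a (ud k) (ud k) := Finset.sum_nonneg fun k _ => hnn _
  -- pointwise Cauchy-Schwarz then sum Cauchy-Schwarz
  have step1 : a u u ≤ ∑ k, Real.sqrt (a (T k u) (T k u)) * Real.sqrt (a (ud k) (ud k)) := by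
    rw [key]
    refine Finset.sum_le_sum fun k _ => ?_
    have h := hCS (T k u) (ud k)
    have habs : a (T k u) (ud k) ≤ |a (T k u) (ud k)| := le_abs_self _
    have : |a (T k u) (ud k)| ≤ Real.sqrt (a (T k u) (T k u)) * Real.sqrt (a (ud k) (ud k)) := by
      rw [← Real.sqrt_sq_eq_abs, ← Real.sqrt_mul (hnn _)]
      exact Real.sqrt_le_sqrt h
    linarith
  have step2 : (∑ k, Real.sqrt (a (T k u) (T k u)) * Real.sqrt (a (ud k) (ud k)))
      ≤ Real.sqrt S * Real.sqrt (∑ k, a (ud k) (ud k)) :=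
    Real.sum_sqrt_mul_sqrt_le Finset.univ (fun k => hnn _) (fun k => hnn _)
  have step3 : Real.sqrt (∑ k, a (ud k) (ud k)) ≤ Real.sqrt (C₀ * a u u) :=
    Real.sqrt_le_sqrt hudbound
  have hmain : a u u ≤ Real.sqrt S * Real.sqrt (C₀ * a u u) := by
    calc a u u ≤ _ := step1
      _ ≤ Real.sqrt S * Real.sqrt (∑ k, a (ud k) (ud k)) := step2
      _ ≤ Real.sqrt S * Real.sqrt (C₀ * a u u) :=
          mul_le_mul_of_nonneg_left step3 (Real.sqrt_nonneg _)
  -- square and conclude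
  have hsq : (a u u) ^ 2 ≤ S * (C₀ * a u u) := by
    have h1 : (a u u) ^ 2 ≤ (Real.sqrt S * Real.sqrt (C₀ * a u u)) ^ 2 := by
      apply pow_le_pow_left₀ huu.le hmain
    rwa [mul_pow, Real.sq_sqrt hSnn,
      Real.sq_sqrt (mul_nonneg hC₀.le huu.le)] at h1
  rw [hS]
  rw [inv_mul_le_iff₀ hC₀]
  nlinarith
end

section
/- Let V be a finite-dimensional real inner product space with inner product a, and let V₁,…,V_N be subspaces such that each element of V belongs to at most C of the supports in the sense that a(uₖ, u_l) = 0 whenever uₖ ∈ Vₖ, u_l ∈ V_l and (k,l) is not an edge of a graph with chromatic number at most C (coloring assumption: the index set {1,…,N} can be partitioned into C classes such that subspaces in the same class are mutually a-orthogonal). Then for the a-orthogonal projections Tₖ onto Vₖ, a(Σₖ₌₁ᴺ Tₖ u, u) ≤ C · a(u,u) for all u ∈ V. -/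
theorem additive_schwarz_upper_bound_coloring
    {V : Type*} [AddCommGroup V] [Module ℝ V] [FiniteDimensional ℝ V]
    (a : V →ₗ[ℝ] V →ₗ[ℝ] ℝ)
    (ha_symm : ∀ u v, a u v = a v u)
    (ha_pos : ∀ u : V, u ≠ 0 → 0 < a u u)
    (N C : ℕ) (hC : 0 < C)
    (Vk : Fin N → Submodule ℝ V)
    (T : Fin N → V →ₗ[ℝ] V)
    (hTrange : ∀ k, ∀ u : V, T k u ∈ Vk k)
    (hTproj : ∀ k, ∀ u : V, ∀ v ∈ Vk k, a (T k u) v = a u v)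
    (color : Fin N → Fin C)
    (hcolor : ∀ k l, k ≠ l → color k = color l →
      ∀ u ∈ Vk k, ∀ v ∈ Vk l, a u v = 0) :
    ∀ u : V, a (∑ k, T k u) u ≤ (C : ℝ) * a u u := by
  -- nonnegativity
  have hnn : ∀ w : V, 0 ≤ a w w := by
    intro w
    by_cases hw : w = 0
    · simp [hw]
    · exact le_of_lt (ha_pos w hw)
  -- Cauchy–Schwarz
  have hcs : ∀ x y : V, (a x y) ^ 2 ≤ a x x * a y y := by
    intro x y
    by_cases hx : x = 0
    · simp [hx]
    · have hxx : 0 < a x x := ha_pos x hx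
      have h0 : 0 ≤ a ((a x x) • y - (a x y) • x) ((a x x) • y - (a x y) • x) :=
        hnn _
      simp only [map_sub, map_smul, LinearMap.sub_apply, LinearMap.smul_apply,
        smul_eq_mul] at h0
      rw [ha_symm y x] at h0
      nlinarith [h0, hxx, mul_pos hxx hxx]
  intro u
  -- group by color
  have hsplit : (∑ k, T k u) =
      ∑ c : Fin C, ∑ k ∈ Finset.univ.filter (fun k => color k = c), T k u := by
    rw [Finset.sum_fiberwise]
  -- per-color bound
  have hcol : ∀ c : Fin C,
      a (∑ k ∈ Finset.univ.filter (fun k => color k = c), T k u) u ≤ a u u := by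
    intro c
    set S := ∑ k ∈ Finset.univ.filter (fun k => color k = c), T k u with hS
    have hdiag : ∀ k ∈ Finset.univ.filter (fun k => color k = c),
        a (T k u) u = a (T k u) (T k u) := by
      intro k _
      rw [hTproj k u (T k u) (hTrange k u), ha_symm]
    have hSu : a S u = ∑ k ∈ Finset.univ.filter (fun k => color k = c),
        a (T k u) (T k u) := by
      rw [hS, map_sum, LinearMap.sum_apply]
      exact Finset.sum_congr rfl hdiag
    have hSS : a S S = ∑ k ∈ Finset.univ.filter (fun k => color k = c),
        a (T k u) (T k u) := by
      rw [hS]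
      simp only [map_sum, LinearMap.sum_apply]
      refine Finset.sum_congr rfl ?_
      intro k hk
      refine Finset.sum_eq_single k ?_ ?_
      · intro l hl hne
        simp only [Finset.mem_filter] at hk hl
        exact hcolor l k hne (hl.2.trans hk.2.symm)
          _ (hTrange l u) _ (hTrange k u)
      · intro h
        exact absurd hk h
    have heq : a S u = a S S := by rw [hSu, hSS]
    rcases eq_or_lt_of_le (show (0:ℝ) ≤ a S u from heq ▸ hnn S) with h0 | h0
    · rw [← h0]; exact hnn u
    · have := hcs S u
      rw [← heq] at this
      nlinarith [this, h0, hnn u]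
  calc a (∑ k, T k u) u
      = ∑ c : Fin C, a (∑ k ∈ Finset.univ.filter (fun k => color k = c), T k u) u := by
        rw [hsplit, map_sum, LinearMap.sum_apply]
    _ ≤ ∑ _c : Fin C, a u u := Finset.sum_le_sum (fun c _ => hcol c)
    _ = (C : ℝ) * a u u := by simp [mul_comm]
end
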